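/- arXiv:1503.04636 — 9 statements merged into one kernel-verified Lean document; each statement's English description precedes it below -/
import Mathlib

section
/- For every integer n ≥ 1, the 2n-th Bernoulli number satisfies B_{2n} = (2^{2n+1}·(2n)!/(2^{2n}−2)) · ∑_{k=1}^{n} ((−1)^{k+1}/(2n+k)!) · C(n+1, k+1) · ∑_{l=0}^{⌊k/2⌋} (−1)^{l} · C(k,l) · (k/2 − l)^{k+2n}, where all arithmetic is in ℚ. -/
/-!
Let `S(x) = sinh x / x`, so that `1 - S = O(x²)`. Then `x / sinh x = 1 / S = ∑ⱼ (1 - S)ʲ`, and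
since `(1 - S)ʲ = O(x²ʲ)` only `j ≤ n` contribute to the coefficient of `x²ⁿ`; by the hockey-stick
identity `∑_{j ≤ n} (1 - S)ʲ = ∑_{k ≤ n} (-1)ᵏ C(n+1, k+1) Sᵏ`. On the other hand
`x / sinh x = 2B(x) - B(2x)` for the Bernoulli generating function `B(x) = x / (eˣ - 1)`, so its
coefficient of `x²ⁿ` is `(2 - 2²ⁿ) B₂ₙ / (2n)!`, while the coefficients of
`Sᵏ = (eˣ - e⁻ˣ)ᵏ / (2x)ᵏ` follow from the binomial theorem; the symmetry `l ↦ k - l` of that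
binomial sum halves its range.
-/

open Finset PowerSeries
open scoped Nat

theorem sum_range_one_sub_pow {R : Type*} [CommRing R] (y : R) (n : ℕ) :
    ∑ j ∈ range (n + 1), (1 - y) ^ j =
      ∑ k ∈ range (n + 1), (-1) ^ k * ((n + 1).choose (k + 1) : R) * y ^ k := by
  calc ∑ j ∈ range (n + 1), (1 - y) ^ j
      = ∑ j ∈ range (n + 1), ∑ k ∈ range (j + 1), (-y) ^ k * (j.choose k : R) := by
        refine sum_congr rfl fun j _ => ?_
        rw [sub_eq_neg_add, add_pow]
        simp
    _ = ∑ k ∈ range (n + 1), ∑ j ∈ Icc k n, (-y) ^ k * (j.choose k : R) :=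
        sum_comm' fun j k => by simp only [mem_range, mem_Icc]; omega
    _ = _ := by
        refine sum_congr rfl fun k _ => ?_
        rw [← mul_sum, ← Nat.cast_sum, Nat.sum_Icc_choose, neg_pow]
        ring

theorem sum_range_succ_eq_two_nsmul_sum_range_half {M : Type*} [AddCommMonoid M] (f : ℕ → M)
    (k : ℕ) (hsymm : ∀ l ≤ k, f (k - l) = f l) (hmid : Even k → f (k / 2) = 0) :
    ∑ l ∈ range (k + 1), f l = 2 • ∑ l ∈ range (k / 2 + 1), f l := by
  have hupper : ∑ i ∈ range (k - k / 2), f (k / 2 + 1 + i) = ∑ i ∈ range (k - k / 2), f i := by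
    rw [← sum_range_reflect]
    refine sum_congr rfl fun i hi => ?_
    rw [mem_range] at hi
    rw [show k / 2 + 1 + (k - k / 2 - 1 - i) = k - i by omega, hsymm i (by omega)]
  have hlower : ∑ i ∈ range (k - k / 2), f i = ∑ l ∈ range (k / 2 + 1), f l := by
    rcases Nat.even_or_odd k with heven | hodd
    · rw [sum_range_succ, hmid heven, add_zero,
        show k - k / 2 = k / 2 by have := Nat.even_iff.mp heven; omega]
    · rw [show k - k / 2 = k / 2 + 1 by have := Nat.odd_iff.mp hodd; omega]
  rw [show k + 1 = k / 2 + 1 + (k - k / 2) by omega, sum_range_add, hupper, hlower, two_nsmul]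

theorem sum_range_choose_mul_half_sub_pow (k N : ℕ) (hN : N ≠ 0) (hpar : Even (k + N)) :
    ∑ l ∈ range (k + 1), (-1 : ℚ) ^ l * k.choose l * ((k : ℚ) / 2 - l) ^ N =
      2 * ∑ l ∈ range (k / 2 + 1), (-1 : ℚ) ^ l * k.choose l * ((k : ℚ) / 2 - l) ^ N := by
  rw [sum_range_succ_eq_two_nsmul_sum_range_half, nsmul_eq_mul, Nat.cast_ofNat]
  · intro l hl
    have hsign : (-1 : ℚ) ^ (k - l) * (-1) ^ N = (-1) ^ l := by
      rw [← pow_add]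
      exact neg_one_pow_congr (by rw [← Nat.even_add]; convert hpar using 1; omega)
    rw [Nat.choose_symm hl, Nat.cast_sub hl, show (k : ℚ) / 2 - (k - l) = -(k / 2 - l) by ring,
      neg_pow ((k : ℚ) / 2 - l), ← hsign]
    ring
  · intro heven
    rw [Nat.cast_div_charZero (even_iff_two_dvd.mp heven), Nat.cast_ofNat, sub_self,
      zero_pow hN, mul_zero]

theorem coeff_eq_sum_choose_of_mul_eq_one {R : Type*} [CommRing R] {G S : R⟦X⟧}
    (hGS : G * S = 1) {d : ℕ} (hS : X ^ d ∣ 1 - S) {m : ℕ} (n : ℕ) (hm : m < d * (n + 1)) :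
    coeff m G = ∑ k ∈ range (n + 1), (-1) ^ k * ((n + 1).choose (k + 1) : R) * coeff m (S ^ k) := by
  have hgeom := geom_sum_mul_neg (1 - S) (n + 1)
  have hG : G = ∑ j ∈ range (n + 1), (1 - S) ^ j + (1 - S) ^ (n + 1) * G := by
    linear_combination (∑ j ∈ range (n + 1), (1 - S) ^ j) * hGS - G * hgeom
  have htail : coeff m ((1 - S) ^ (n + 1) * G) = 0 := by
    have hdvd : (X : R⟦X⟧) ^ (d * (n + 1)) ∣ (1 - S) ^ (n + 1) * G := by
      rw [pow_mul]
      exact (pow_dvd_pow_of_dvd hS (n + 1)).mul_right G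
    exact X_pow_dvd_iff.mp hdvd m hm
  rw [hG, map_add, htail, add_zero, sum_range_one_sub_pow, map_sum]
  refine sum_congr rfl fun k _ => ?_
  rw [← map_natCast (C (R := R)), ← map_one (C (R := R)), ← map_neg, ← map_pow, ← map_mul,
    mul_assoc, coeff_C_mul, ← mul_assoc]

noncomputable def sinhSeries : ℚ⟦X⟧ := C 2⁻¹ * (exp ℚ - rescale (-1) (exp ℚ))

noncomputable def sinhDivXSeries : ℚ⟦X⟧ := mk fun m => coeff (m + 1) sinhSeries

/-- `x / sinh x = 2x / (eˣ - 1) - 2x / (e²ˣ - 1)`. -/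
noncomputable def xDivSinhSeries : ℚ⟦X⟧ :=
  2 * bernoulliPowerSeries ℚ - rescale 2 (bernoulliPowerSeries ℚ)

theorem coeff_sinhSeries (m : ℕ) : coeff m sinhSeries = (1 - (-1) ^ m) / (2 * m !) := by
  simp only [sinhSeries, coeff_C_mul, map_sub, coeff_exp, coeff_rescale, Algebra.algebraMap_self,
    RingHom.id_apply]
  ring

theorem X_mul_sinhDivXSeries : X * sinhDivXSeries = sinhSeries := by
  rw [sinhDivXSeries, ← sub_const_eq_X_mul_shift, ← coeff_zero_eq_constantCoeff_apply,
    coeff_sinhSeries]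
  simp

theorem X_sq_dvd_one_sub_sinhDivXSeries : X ^ 2 ∣ 1 - sinhDivXSeries := by
  refine X_pow_dvd_iff.mpr fun m hm => ?_
  interval_cases m <;> simp [sinhDivXSeries, coeff_sinhSeries]

theorem xDivSinhSeries_mul_sinhSeries : xDivSinhSeries * sinhSeries = X := by
  have hexp_neg : exp ℚ * rescale (-1) (exp ℚ) = 1 := by
    simpa using exp_mul_exp_eq_exp_add (A := ℚ) 1 (-1)
  have hexp_two : exp ℚ * exp ℚ = rescale 2 (exp ℚ) := by
    simpa [one_add_one_eq_two] using exp_mul_exp_eq_exp_add (A := ℚ) 1 1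
  have hB := bernoulliPowerSeries_mul_exp_sub_one ℚ
  have hB_two : rescale 2 (bernoulliPowerSeries ℚ) * (rescale 2 (exp ℚ) - 1) = 2 * X := by
    simpa [rescale_X, map_ofNat] using congrArg (rescale (2 : ℚ)) hB
  have hhalf : (2 : ℚ⟦X⟧) * C 2⁻¹ = 1 := by
    rw [← map_ofNat C 2, ← map_mul]
    norm_num
  have hexp_ne : exp ℚ ≠ 0 := fun h => by simpa using congrArg constantCoeff h
  -- times `eˣ`: `(2B(x) - B(2x)) (e²ˣ - 1) / 2 = x (eˣ + 1) - x = x eˣ`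
  refine mul_left_cancel₀ hexp_ne ?_
  rw [xDivSinhSeries, sinhSeries]
  set B := bernoulliPowerSeries ℚ
  set h : ℚ⟦X⟧ := C 2⁻¹
  linear_combination (h * (2 * B - rescale 2 B) - 2 * h * B) * hexp_two
    - h * (2 * B - rescale 2 B) * hexp_neg - h * hB_two + 2 * h * (exp ℚ + 1) * hB
    + exp ℚ * X * hhalf

theorem xDivSinhSeries_mul_sinhDivXSeries : xDivSinhSeries * sinhDivXSeries = 1 :=
  mul_left_cancel₀ X_ne_zero <| by
    rw [mul_left_comm, X_mul_sinhDivXSeries, xDivSinhSeries_mul_sinhSeries, mul_one]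

theorem coeff_xDivSinhSeries (m : ℕ) :
    coeff m xDivSinhSeries = (2 - 2 ^ m) * bernoulli m / m ! := by
  simp only [xDivSinhSeries, bernoulliPowerSeries, ← map_ofNat C 2, map_sub, coeff_C_mul, coeff_mk,
    coeff_rescale, Algebra.algebraMap_self, RingHom.id_apply]
  ring

theorem exp_sub_exp_neg_pow (k : ℕ) :
    (exp ℚ - rescale (-1) (exp ℚ)) ^ k =
      ∑ l ∈ range (k + 1), C ((-1 : ℚ) ^ l * k.choose l) * rescale ((k : ℚ) - 2 * l) (exp ℚ) := by
  rw [sub_eq_neg_add, add_pow]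
  refine sum_congr rfl fun l hl => ?_
  have hlk : l ≤ k := Nat.lt_succ_iff.mp (mem_range.mp hl)
  have hprod : rescale ((l : ℚ) * -1) (exp ℚ) * rescale ((k - l : ℕ) : ℚ) (exp ℚ) =
      rescale ((k : ℚ) - 2 * l) (exp ℚ) := by
    rw [exp_mul_exp_eq_exp_add, Nat.cast_sub hlk]
    ring_nf
  rw [neg_pow, ← map_pow, exp_pow_eq_rescale_exp, exp_pow_eq_rescale_exp, rescale_rescale, ← hprod]
  simp only [map_mul, map_pow, map_neg, map_one, map_natCast]
  ring

theorem coeff_sinhSeries_pow (k M : ℕ) :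
    coeff M (sinhSeries ^ k) =
      (∑ l ∈ range (k + 1), (-1) ^ l * k.choose l * ((k : ℚ) - 2 * l) ^ M) / (2 ^ k * M !) := by
  rw [sinhSeries, mul_pow, ← map_pow, coeff_C_mul, exp_sub_exp_neg_pow, map_sum, sum_div, mul_sum]
  refine sum_congr rfl fun l _ => ?_
  simp only [coeff_C_mul, coeff_rescale, coeff_exp, Algebra.algebraMap_self, RingHom.id_apply,
    one_div, inv_pow]
  field_simp

theorem coeff_sinhDivXSeries_pow (n k : ℕ) (hk : k ≠ 0) :
    coeff (2 * n) (sinhDivXSeries ^ k) =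
      2 ^ (2 * n + 1) / (2 * n + k)! *
        ∑ l ∈ range (k / 2 + 1), (-1 : ℚ) ^ l * k.choose l * ((k : ℚ) / 2 - l) ^ (k + 2 * n) := by
  have hdouble : ∀ l : ℕ, ((k : ℚ) - 2 * l) ^ (2 * n + k) =
      2 ^ (2 * n + k) * ((k : ℚ) / 2 - l) ^ (k + 2 * n) := fun l => by
    rw [add_comm k, ← mul_pow]
    ring
  rw [← coeff_X_pow_mul _ k, ← mul_pow, X_mul_sinhDivXSeries, coeff_sinhSeries_pow]
  simp_rw [hdouble, mul_left_comm _ (2 ^ (2 * n + k) : ℚ)]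
  rw [← mul_sum, sum_range_choose_mul_half_sub_pow k _ (by omega) ⟨k + n, by ring⟩]
  field_simp
  ring

/-- For every integer `n ≥ 1`, the `2n`-th Bernoulli number satisfies
`B_{2n} = (2^{2n+1}·(2n)!/(2^{2n}−2)) · ∑_{k=1}^{n} ((−1)^{k+1}/(2n+k)!) · C(n+1,k+1) ·
∑_{l=0}^{⌊k/2⌋} (−1)^l · C(k,l) · (k/2 − l)^{k+2n}`, all arithmetic in `ℚ`. -/
theorem bernoulli_even_double_sum (n : ℕ) (hn : 1 ≤ n) :
    bernoulli (2 * n) =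
      (2 ^ (2 * n + 1) * (Nat.factorial (2 * n) : ℚ) / (2 ^ (2 * n) - 2)) *
        ∑ k ∈ Finset.Icc 1 n,
          ((-1 : ℚ) ^ (k + 1) / (Nat.factorial (2 * n + k) : ℚ)) *
            (Nat.choose (n + 1) (k + 1) : ℚ) *
            ∑ l ∈ Finset.range (k / 2 + 1),
              (-1 : ℚ) ^ l * (Nat.choose k l : ℚ) * ((k : ℚ) / 2 - (l : ℚ)) ^ (k + 2 * n) := by
  have hcoeff := coeff_xDivSinhSeries (2 * n)
  rw [coeff_eq_sum_choose_of_mul_eq_one xDivSinhSeries_mul_sinhDivXSeries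
      X_sq_dvd_one_sub_sinhDivXSeries n (by omega), sum_range_eq_add_Ico _ (by omega), pow_zero, pow_zero,
    coeff_one, if_neg (by omega), mul_zero, zero_add, Ico_add_one_right_eq_Icc] at hcoeff
  have hsum : ∑ k ∈ Icc 1 n, (-1 : ℚ) ^ k * ((n + 1).choose (k + 1) : ℚ) *
        coeff (2 * n) (sinhDivXSeries ^ k) =
      -2 ^ (2 * n + 1) * ∑ k ∈ Icc 1 n, ((-1 : ℚ) ^ (k + 1) / (2 * n + k)!) *
        ((n + 1).choose (k + 1) : ℚ) * ∑ l ∈ range (k / 2 + 1),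
          (-1 : ℚ) ^ l * k.choose l * ((k : ℚ) / 2 - l) ^ (k + 2 * n) := by
    rw [mul_sum]
    refine sum_congr rfl fun k hk => ?_
    rw [coeff_sinhDivXSeries_pow n k (by grind)]
    ring
  have hpow : (2 : ℚ) ^ (2 * n) - 2 ≠ 0 := by
    have : (2 : ℚ) ^ 2 ≤ 2 ^ (2 * n) := pow_le_pow_right₀ one_le_two (by omega)
    linarith
  rw [hsum, eq_div_iff (by positivity)] at hcoeff
  rw [div_mul_eq_mul_div, eq_div_iff hpow]
  linear_combination hcoeff
end

section
/- For every integer n ≥ 1, 2·B_{2n}/(2n) = 1/(2n) + ∑_{i=1}^{n} (−1)^{i} · 2 · S_i(n) · (2n−1)!/(2n+i)!, i.e. the i-th term's denominator is the product (2n)(2n+1)⋯(2n+i). -/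
/-!
Put `scaledS i n = S_i(n)·(2n)!/(2n+i)!`. In these terms the recursion for `S` becomes
`(2n+1)·scaledS (i+1) n = ∑_{k=i}^{n-1} C(2n+1,2k)·scaledS i k`, and from it
`W(n) = 1/2 + ∑_{i=1}^n (-1)^i scaledS i n` satisfies `∑_{k=1}^n C(2n+1,2k)·W(k) = (2n-1)/2`.
Since `B_1 = -1/2` and the other odd Bernoulli numbers vanish, `∑_k C(2n+1,k)·B_k = 0` is the same
triangular system for `B_{2k}`, so `B_{2n} = W(n)`; dividing by `n` gives the claim.
-/

/-- The partial sums `S_i(n)`: `S_1(n) = 1 + (1/2)·∑_{l=1}^{n-1} C(2n+1, 2l)` and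
`S_{i+1}(n) = ∑_{k=i}^{n-1} C(2n+i+1, 2k+i) · S_i(k)` for `i ≥ 1`. -/
def S : ℕ → ℕ → ℚ
  | 0, _ => 0
  | 1, n => 1 + (1 / 2) * ∑ l ∈ Finset.Ico 1 n, (Nat.choose (2 * n + 1) (2 * l) : ℚ)
  | (i + 2), n =>
      ∑ k ∈ Finset.Ico (i + 1) n, (Nat.choose (2 * n + (i + 1) + 1) (2 * k + (i + 1)) : ℚ) *
        S (i + 1) k

open Finset
open scoped Nat

theorem Finset.sum_range_two_mul_add_one {M : Type*} [AddCommMonoid M] (f : ℕ → M) (n : ℕ) :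
    ∑ k ∈ range (2 * n + 1), f k =
      ∑ j ∈ range (n + 1), f (2 * j) + ∑ j ∈ range n, f (2 * j + 1) := by
  induction n with
  | zero => simp
  | succ n ih =>
    rw [show 2 * (n + 1) + 1 = 2 * n + 1 + 1 + 1 by ring, sum_range_succ, sum_range_succ, ih]
    simp only [sum_range_succ, show 2 * n + 1 + 1 = 2 * (n + 1) by ring]
    abel

theorem Finset.sum_range_succ_eq_sum_Icc {M : Type*} [AddCommMonoid M] (f : ℕ → M) (n : ℕ) :
    ∑ k ∈ range n, f (k + 1) = ∑ k ∈ Icc 1 n, f k := by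
  rw [range_eq_Ico, sum_Ico_add', zero_add, Ico_add_one_right_eq_Icc]

theorem sum_Icc_choose_mul_bernoulli_two_mul {n : ℕ} (hn : 1 ≤ n) :
    ∑ k ∈ Icc 1 n, ((2 * n + 1).choose (2 * k) : ℚ) * bernoulli (2 * k) = (2 * n - 1) / 2 := by
  have h := sum_bernoulli (2 * n + 1)
  rw [if_neg (by omega), sum_range_two_mul_add_one, sum_range_succ',
    sum_range_succ_eq_sum_Icc (fun k => ((2 * n + 1).choose (2 * k) : ℚ) * bernoulli (2 * k))] at h
  have hodd : ∑ j ∈ range n, ((2 * n + 1).choose (2 * j + 1) : ℚ) * bernoulli (2 * j + 1) =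
      -(2 * n + 1) / 2 := by
    rw [sum_eq_single_of_mem 0 (mem_range.mpr hn)]
    · rw [mul_zero, zero_add, Nat.choose_one_right, bernoulli_one]
      push_cast
      ring
    · intro j _ hj
      rw [bernoulli_eq_zero_of_odd (odd_two_mul_add_one j) (by omega), mul_zero]
  rw [hodd] at h
  simp only [mul_zero, Nat.choose_zero_right, Nat.cast_one, bernoulli_zero, mul_one] at h
  linear_combination h

theorem Nat.cast_choose_add_div_factorial (K : Type*) [Field K] [CharZero K] {a b : ℕ} (h : b ≤ a)
    (c : ℕ) : ((a + c).choose (b + c) : K) / (a + c)! = a.choose b * b ! / (b + c)! / a ! := by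
  have := (a + c).factorial_ne_zero
  have := a.factorial_ne_zero
  have := b.factorial_ne_zero
  rw [Nat.cast_choose K h, Nat.cast_choose K (by omega), Nat.add_sub_add_right]
  field_simp

def scaledS (i n : ℕ) : ℚ := S i n * (2 * n)! / (2 * n + i)!

theorem two_mul_add_one_mul_scaledS_one (n : ℕ) :
    (2 * n + 1) * scaledS 1 n = 1 + (1 / 2) * ∑ l ∈ Ico 1 n, ((2 * n + 1).choose (2 * l) : ℚ) := by
  rw [scaledS, Nat.factorial_succ]
  push_cast
  field_simp
  rw [S]
  ring

theorem two_mul_add_one_mul_scaledS_succ {i : ℕ} (hi : 1 ≤ i) (n : ℕ) :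
    (2 * n + 1) * scaledS (i + 1) n =
      ∑ k ∈ Ico i n, ((2 * n + 1).choose (2 * k) : ℚ) * scaledS i k := by
  obtain ⟨i, rfl⟩ := Nat.exists_eq_add_of_le' hi
  rw [scaledS, S, sum_mul, sum_div, mul_sum]
  refine sum_congr rfl fun k hk => ?_
  have hkn : 2 * k ≤ 2 * n + 1 := by have := (mem_Ico.mp hk).2; omega
  have key := Nat.cast_choose_add_div_factorial ℚ hkn (i + 1)
  rw [scaledS, show 2 * n + (i + 2) = 2 * n + 1 + (i + 1) by ring,
    show 2 * n + (i + 1) + 1 = 2 * n + 1 + (i + 1) by ring]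
  rw [Nat.factorial_succ] at key
  push_cast at key
  field_simp at key ⊢
  linear_combination S (i + 1) k * key

def alternatingScaledS (n : ℕ) : ℚ := ∑ i ∈ Icc 1 n, (-1) ^ i * scaledS i n

theorem two_mul_add_one_mul_alternatingScaledS {n : ℕ} (hn : 1 ≤ n) :
    (2 * n + 1) * alternatingScaledS n =
      -1 - (1 / 2) * ∑ k ∈ Ico 1 n, ((2 * n + 1).choose (2 * k) : ℚ) -
        ∑ k ∈ Ico 1 n, ((2 * n + 1).choose (2 * k) : ℚ) * alternatingScaledS k := by
  have hsplit : alternatingScaledS n =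
      -scaledS 1 n + ∑ i ∈ Ico 1 n, (-1) ^ (i + 1) * scaledS (i + 1) n := by
    rw [alternatingScaledS, ← Ico_add_one_right_eq_Icc, sum_eq_sum_Ico_succ_bot (by omega),
      ← sum_Ico_add']
    simp only [pow_one, neg_mul, one_mul]
  have htail : (2 * n + 1) * ∑ i ∈ Ico 1 n, (-1) ^ (i + 1) * scaledS (i + 1) n =
      -∑ k ∈ Ico 1 n, ((2 * n + 1).choose (2 * k) : ℚ) * alternatingScaledS k := by
    calc (2 * n + 1) * ∑ i ∈ Ico 1 n, (-1) ^ (i + 1) * scaledS (i + 1) n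
        = -∑ i ∈ Ico 1 n, ∑ k ∈ Ico i n,
            (-1) ^ i * (((2 * n + 1).choose (2 * k) : ℚ) * scaledS i k) := by
          rw [mul_sum, ← sum_neg_distrib]
          refine sum_congr rfl fun i hi => ?_
          rw [← mul_sum, ← two_mul_add_one_mul_scaledS_succ (mem_Ico.mp hi).1]
          ring
      _ = -∑ k ∈ Ico 1 n, ((2 * n + 1).choose (2 * k) : ℚ) * alternatingScaledS k := by
          rw [sum_Ico_Ico_comm]
          refine congrArg _ (sum_congr rfl fun k _ => ?_)
          rw [alternatingScaledS, ← Ico_add_one_right_eq_Icc, mul_sum]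
          refine sum_congr rfl fun i _ => ?_
          ring
  rw [hsplit, mul_add, mul_neg, htail, two_mul_add_one_mul_scaledS_one]
  ring

theorem sum_Icc_choose_mul_half_add_alternatingScaledS {n : ℕ} (hn : 1 ≤ n) :
    ∑ k ∈ Icc 1 n, ((2 * n + 1).choose (2 * k) : ℚ) * (1 / 2 + alternatingScaledS k) =
      (2 * n - 1) / 2 := by
  have hchoose : (2 * n + 1).choose (2 * n) = 2 * n + 1 := by
    rw [Nat.choose_symm_of_eq_add rfl, Nat.choose_one_right]
  simp only [Icc_eq_cons_Ico hn, sum_cons, hchoose, mul_add, sum_add_distrib, ← sum_mul]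
  push_cast
  linear_combination two_mul_add_one_mul_alternatingScaledS hn

theorem eq_of_forall_sum_Icc_mul_eq {R : Type*} [Ring R] [NoZeroDivisors R] (a : ℕ → ℕ → R)
    {f g : ℕ → R} (ha : ∀ n, 1 ≤ n → a n n ≠ 0)
    (h : ∀ n, 1 ≤ n → ∑ k ∈ Icc 1 n, a n k * f k = ∑ k ∈ Icc 1 n, a n k * g k) :
    ∀ n, 1 ≤ n → f n = g n := by
  intro n
  induction n using Nat.strong_induction_on with
  | _ n ih =>
    intro hn
    have hn' := h n hn
    rw [Icc_eq_cons_Ico hn, sum_cons, sum_cons,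
      sum_congr rfl fun k hk => by rw [ih k (mem_Ico.mp hk).2 (mem_Ico.mp hk).1]] at hn'
    exact mul_left_cancel₀ (ha n hn) (add_right_cancel hn')

theorem bernoulli_two_mul_eq_half_add_alternatingScaledS {n : ℕ} (hn : 1 ≤ n) :
    bernoulli (2 * n) = 1 / 2 + alternatingScaledS n :=
  eq_of_forall_sum_Icc_mul_eq (fun n k => ((2 * n + 1).choose (2 * k) : ℚ))
    (f := fun k => bernoulli (2 * k)) (g := fun k => 1 / 2 + alternatingScaledS k)
    (fun n _ => Nat.cast_ne_zero.mpr (Nat.choose_pos (by omega)).ne')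
    (fun n hn => by
      rw [sum_Icc_choose_mul_bernoulli_two_mul hn, sum_Icc_choose_mul_half_add_alternatingScaledS hn])
    n hn

theorem two_bernoulli_div_eq_sum_S_general (n : ℕ) :
    2 * bernoulli (2 * n) / (2 * n) =
      1 / (2 * n) + ∑ i ∈ Finset.Icc 1 n,
        (-1 : ℚ) ^ i * 2 * S i n * (Nat.factorial (2 * n - 1) : ℚ) /
          (Nat.factorial (2 * n + i) : ℚ) := by
  obtain rfl | hn := n.eq_zero_or_pos
  · simp -- both sides are `0`, as `x / 0 = 0`
  have hterm : ∀ i, (-1 : ℚ) ^ i * 2 * S i n * (2 * n - 1)! / (2 * n + i)! =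
      (-1) ^ i * scaledS i n / n := by
    intro i
    rw [scaledS, ← Nat.mul_factorial_pred (by omega : 2 * n ≠ 0)]
    push_cast
    field_simp
  simp only [hterm, ← sum_div, bernoulli_two_mul_eq_half_add_alternatingScaledS hn,
    alternatingScaledS]
  field_simp

/-- For every integer `n ≥ 1`,
`2·B_{2n}/(2n) = 1/(2n) + ∑_{i=1}^{n} (−1)^i · 2 · S_i(n) · (2n−1)!/(2n+i)!`. -/
theorem two_bernoulli_div_eq_sum_S (n : ℕ) (hn : 1 ≤ n) :
    2 * bernoulli (2 * n) / (2 * n) =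
      1 / (2 * n) + ∑ i ∈ Finset.Icc 1 n,
        (-1 : ℚ) ^ i * 2 * S i n * (Nat.factorial (2 * n - 1) : ℚ) /
          (Nat.factorial (2 * n + i) : ℚ) :=
  two_bernoulli_div_eq_sum_S_general n
end

section
/- For every integer n ≥ 1, the first two partial sums have the closed forms S_1(n) = (2^{2n} − 2n)/2 and S_2(n) = (9/8)·3^{2n} − (2n+1)·2^{2n} + 2n² + n − 9/8. -/
open Finset

lemma sum_range_two_mul' (N : ℕ) (f : ℕ → ℚ) :
    ∑ j ∈ range (2 * N), f j
      = ∑ k ∈ range N, f (2 * k) + ∑ k ∈ range N, f (2 * k + 1) := by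
  induction N with
  | zero => simp
  | succ N ih =>
    have h : 2 * (N + 1) = 2 * N + 1 + 1 := by ring
    rw [h, sum_range_succ, sum_range_succ, ih, sum_range_succ, sum_range_succ]
    ring

lemma binom_sum' (m : ℕ) (x : ℚ) :
    ∑ j ∈ range (m + 1), (m.choose j : ℚ) * x ^ j = (1 + x) ^ m := by
  rw [add_comm (1:ℚ) x, add_pow]
  simp [mul_comm]

lemma even_sum (n : ℕ) :
    ∑ k ∈ range (n + 1), ((2 * n + 1).choose (2 * k) : ℚ) = 2 ^ (2 * n) := by
  have h1 := binom_sum' (2 * n + 1) 1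
  have h2 := binom_sum' (2 * n + 1) (-1)
  have e : 2 * n + 1 + 1 = 2 * (n + 1) := by ring
  rw [e, sum_range_two_mul'] at h1 h2
  simp only [one_pow, mul_one, pow_mul, pow_succ, neg_neg, neg_mul] at h1 h2
  norm_num at h1 h2
  have h4 : (2:ℚ) ^ (2 * n) = 4 ^ n := by rw [pow_mul]; norm_num
  linarith

lemma odd_sum_pow (n : ℕ) (x : ℚ) :
    ∑ k ∈ range (n + 1), ((2 * n + 2).choose (2 * k + 1) : ℚ) * x ^ (2 * k + 1)
      = ((1 + x) ^ (2 * n + 2) - (1 - x) ^ (2 * n + 2)) / 2 := by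
  have h1 := binom_sum' (2 * n + 2) x
  have h2 := binom_sum' (2 * n + 2) (-x)
  have e : 2 * n + 2 + 1 = 2 * (n + 1) + 1 := by ring
  rw [e, sum_range_succ, sum_range_two_mul'] at h1 h2
  have e2 : 2 * (n + 1) = 2 * n + 2 := by ring
  rw [e2, Nat.choose_self] at h1 h2
  have hx : ∀ k : ℕ, (-x) ^ (2 * k) = x ^ (2 * k) := by
    intro k; rw [pow_mul, pow_mul, neg_pow_two]
  have hx' : ∀ k : ℕ, (-x) ^ (2 * k + 1) = -(x ^ (2 * k + 1)) := by
    intro k; rw [pow_succ, pow_succ, hx]; ring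
  simp only [hx, hx'] at h2
  have hlast : (-x) ^ (2 * n + 2) = x ^ (2 * n + 2) := by
    have := hx (n + 1); rwa [show 2 * (n + 1) = 2 * n + 2 from by ring] at this
  rw [hlast] at h2
  simp only [mul_neg, Finset.sum_neg_distrib] at h2
  rw [sub_eq_add_neg (1:ℚ) x]
  linarith

lemma odd4 (n : ℕ) :
    ∑ k ∈ range (n + 1), ((2 * n + 2).choose (2 * k + 1) : ℚ) * 4 ^ k
      = (3 ^ (2 * n + 2) - 1) / 4 := by
  have h := odd_sum_pow n 2
  have hp : ∀ k : ℕ, (2:ℚ) ^ (2 * k + 1) = 2 * 4 ^ k := by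
    intro k; rw [pow_succ, pow_mul]; norm_num; ring
  simp only [hp] at h
  have h2 : ∑ k ∈ range (n + 1), ((2 * n + 2).choose (2 * k + 1) : ℚ) * (2 * 4 ^ k)
      = 2 * ∑ k ∈ range (n + 1), ((2 * n + 2).choose (2 * k + 1) : ℚ) * 4 ^ k := by
    rw [Finset.mul_sum]; exact Finset.sum_congr rfl fun k _ => by ring
  rw [h2] at h
  norm_num at h
  have hm : ((-1:ℚ)) ^ (2 * n + 2) = 1 := by
    rw [show 2 * n + 2 = 2 * (n + 1) from by ring, pow_mul]; norm_num
  rw [hm] at h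
  linarith

lemma odd1 (n : ℕ) :
    ∑ k ∈ range (n + 1), ((2 * n + 2).choose (2 * k + 1) : ℚ) = 2 ^ (2 * n + 1) := by
  have h := odd_sum_pow n 1
  norm_num at h
  rw [h]
  rw [pow_succ, pow_succ]
  ring

lemma oddW (n : ℕ) :
    ∑ k ∈ range (n + 1), ((2 * n + 2).choose (2 * k + 1) : ℚ) * (2 * k + 1)
      = (2 * n + 2) * 2 ^ (2 * n) := by
  have key : ∀ k : ℕ, ((2 * n + 2).choose (2 * k + 1) : ℚ) * (2 * (k:ℚ) + 1)
      = (2 * (n:ℚ) + 2) * ((2 * n + 1).choose (2 * k)) := by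
    intro k
    have h := Nat.add_one_mul_choose_eq (2 * n + 1) (2 * k)
    have h' : (2 * n + 2) * (2 * n + 1).choose (2 * k)
        = (2 * n + 2).choose (2 * k + 1) * (2 * k + 1) := h
    have := congrArg (fun m : ℕ => (m : ℚ)) h'
    push_cast at this
    linarith
  rw [Finset.sum_congr rfl fun k _ => key k, ← Finset.mul_sum, even_sum]

lemma S1_eq (n : ℕ) (hn : 1 ≤ n) :
    S 1 n = (2 ^ (2 * n) - 2 * (n : ℚ)) / 2 := by
  have h := even_sum n
  rw [range_eq_Ico, Finset.sum_Ico_succ_top (Nat.zero_le n),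
    Finset.sum_eq_sum_Ico_succ_bot hn] at h
  have hc : (2 * n + 1).choose (2 * n) = 2 * n + 1 := by
    have h1 := Nat.choose_symm (n := 2 * n + 1) (k := 1) (by omega)
    simpa using h1
  rw [hc] at h
  norm_num at h
  simp only [S]
  linarith


/-- For every integer `n ≥ 1`, `S_1(n) = (2^{2n} − 2n)/2` and
`S_2(n) = (9/8)·3^{2n} − (2n+1)·2^{2n} + 2n² + n − 9/8`. -/
theorem S_one_S_two_closed_form (n : ℕ) (hn : 1 ≤ n) :
    S 1 n = (2 ^ (2 * n) - 2 * (n : ℚ)) / 2 ∧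
    S 2 n = (9 / 8) * 3 ^ (2 * n) - (2 * (n : ℚ) + 1) * 2 ^ (2 * n) +
      2 * (n : ℚ) ^ 2 + (n : ℚ) - 9 / 8 := by
  refine ⟨S1_eq n hn, ?_⟩
  have hS2 : S 2 n = ∑ k ∈ Finset.Ico 1 n,
      ((2 * n + 2).choose (2 * k + 1) : ℚ) * S 1 k := by
    show S (0 + 2) n = _
    simp only [S]
  have hS2' : S 2 n = ∑ k ∈ Finset.Ico 1 n,
      ((2 * n + 2).choose (2 * k + 1) : ℚ) * ((2 ^ (2 * k) - 2 * (k : ℚ)) / 2) := by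
    rw [hS2]
    refine Finset.sum_congr rfl fun k hk => ?_
    rw [S1_eq k (Finset.mem_Ico.mp hk).1]
  have key : ∀ k : ℕ, ((2 * n + 2).choose (2 * k + 1) : ℚ) * ((2 ^ (2 * k) - 2 * (k : ℚ)) / 2)
      = (1/2) * (((2 * n + 2).choose (2 * k + 1) : ℚ) * 4 ^ k)
        - (1/2) * (((2 * n + 2).choose (2 * k + 1) : ℚ) * (2 * (k : ℚ) + 1))
        + (1/2) * ((2 * n + 2).choose (2 * k + 1) : ℚ) := by
    intro k
    rw [pow_mul]
    norm_num
    ring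
  have hG : ∑ k ∈ range (n + 1),
      ((2 * n + 2).choose (2 * k + 1) : ℚ) * ((2 ^ (2 * k) - 2 * (k : ℚ)) / 2)
      = (1/2) * ((3 ^ (2 * n + 2) - 1) / 4) - (1/2) * ((2 * (n:ℚ) + 2) * 2 ^ (2 * n))
        + (1/2) * 2 ^ (2 * n + 1) := by
    rw [Finset.sum_congr rfl fun k _ => key k, Finset.sum_add_distrib,
      Finset.sum_sub_distrib, ← Finset.mul_sum, ← Finset.mul_sum, ← Finset.mul_sum,
      odd4, oddW, odd1]
  rw [range_eq_Ico, Finset.sum_Ico_succ_top (Nat.zero_le n),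
    Finset.sum_eq_sum_Ico_succ_bot hn] at hG
  have hcn : (2 * n + 2).choose (2 * n + 1) = 2 * n + 2 := by
    have h1 := Nat.choose_symm (n := 2 * n + 2) (k := 1) (by omega)
    simpa using h1
  rw [hcn] at hG
  norm_num [Nat.choose_one_right] at hG
  have e9 : (3:ℚ) ^ (2 * n + 2) = 9 * 3 ^ (2 * n) := by ring
  have e2 : (2:ℚ) ^ (2 * n + 1) = 2 * 2 ^ (2 * n) := by rw [pow_succ]; ring
  rw [e9, e2] at hG
  rw [hS2']
  linarith
end

section
/- For every integer n ≥ 1 there exist rational numbers α_1, …, α_n such that for every integer k ≥ 0 one has A(n,k) = ∑_{l=1}^{n} α_l · k^l; that is, the function k ↦ A(n,k) agrees on the nonnegative integers with a polynomial of degree at most n having zero constant term. -/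
/-- `A(n,k) := (2·(2n)!/(2n+k)!) · ∑_{j=0}^{⌊k/2⌋} (−1)^j · C(k,j) · (k/2 − j)^{k+2n}` in `ℚ`. -/
def A (n k : ℕ) : ℚ :=
  (2 * (Nat.factorial (2 * n) : ℚ) / (Nat.factorial (2 * n + k) : ℚ)) *
    ∑ j ∈ Finset.range (k / 2 + 1),
      (-1 : ℚ) ^ j * (Nat.choose k j : ℚ) * ((k : ℚ) / 2 - (j : ℚ)) ^ (k + 2 * n)

/-!
The full alternating sum `∑_{j=0}^{k} (-1)^j C(k,j) (k/2 - j)^{k+2n}` is `(k+2n)!` times the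
coefficient of `X^{k+2n}` in `(e^{X/2} - e^{-X/2})^k`, and its terms are invariant under
`j ↦ k - j` (the middle term vanishing since `n ≥ 1`); hence `A(n,k) = (2n)! [X^{2n}] F^k` for
`F = (e^{X/2} - e^{-X/2}) / X`. As `F = 1 + G` with `X² ∣ G`, the binomial theorem gives
`[X^{2n}] F^k = ∑_{i ≤ n} C(k,i) [X^{2n}] G^i`, a polynomial in `k` of degree at most `n` that
vanishes at `k = 0`.
-/

open Finset PowerSeries

theorem Polynomial.eval_eq_sum_Icc_of_coeff_zero_eq_zero {R : Type*} [Semiring R]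
    {p : Polynomial R} {n : ℕ} (hp : p.natDegree ≤ n) (h0 : p.coeff 0 = 0) (x : R) :
    p.eval x = ∑ l ∈ Icc 1 n, p.coeff l * x ^ l := by
  rw [eval_eq_sum_range' (Nat.lt_succ_of_le hp), sum_range_succ', h0, zero_mul, add_zero,
    range_eq_Ico, sum_Ico_add' (fun l => p.coeff l * x ^ l), ← Ico_add_one_right_eq_Icc]

theorem exists_sum_Icc_pow_eq_sum_choose {K : Type*} [Field K] [CharZero K] (c : ℕ → K)
    (hc : c 0 = 0) (n : ℕ) :
    ∃ α : ℕ → K, ∀ k : ℕ,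
      ∑ i ∈ range (n + 1), c i * k.choose i = ∑ l ∈ Icc 1 n, α l * (k : K) ^ l := by
  set p : Polynomial K :=
    ∑ i ∈ range (n + 1), Polynomial.C (c i / i.factorial) * descPochhammer K i
  have hp_eval (k : ℕ) : p.eval (k : K) = ∑ i ∈ range (n + 1), c i * k.choose i := by
    simp only [p, Polynomial.eval_finsetSum, Polynomial.eval_mul, Polynomial.eval_C,
      descPochhammer_eval_eq_descFactorial, Nat.descFactorial_eq_factorial_mul_choose,
      Nat.cast_mul]
    refine sum_congr rfl fun i _ => ?_
    rw [← mul_assoc, div_mul_cancel₀ _ (Nat.cast_ne_zero.mpr i.factorial_ne_zero)]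
  have hp_natDegree : p.natDegree ≤ n :=
    Polynomial.natDegree_sum_le_of_forall_le _ _ fun i hi =>
      (Polynomial.natDegree_C_mul_le _ _).trans
        ((descPochhammer_natDegree K i).trans_le (mem_range_succ_iff.mp hi))
  have hp_coeff_zero : p.coeff 0 = 0 := by
    rw [Polynomial.coeff_zero_eq_eval_zero, ← Nat.cast_zero, hp_eval, sum_range_succ']
    simp [hc]
  exact ⟨p.coeff, fun k => (hp_eval k).symm.trans
    (Polynomial.eval_eq_sum_Icc_of_coeff_zero_eq_zero hp_natDegree hp_coeff_zero _)⟩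

theorem Finset.sum_range_succ_eq_two_nsmul_of_symm {M : Type*} [AddCommMonoid M] {f : ℕ → M}
    {k : ℕ} (hsymm : ∀ j ≤ k, f (k - j) = f j) (hmid : Even k → f (k / 2) = 0) :
    ∑ j ∈ range (k + 1), f j = 2 • ∑ j ∈ range (k / 2 + 1), f j := by
  have hupper (r : ℕ) (hr : k / 2 + r = k) :
      ∑ x ∈ range r, f (k / 2 + 1 + x) = ∑ j ∈ range r, f j := by
    rw [← sum_range_reflect f r]
    refine sum_congr rfl fun x hx => ?_
    rw [mem_range] at hx
    rw [← hsymm (r - 1 - x) (by omega)]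
    congr 1
    omega
  rcases Nat.even_or_odd k with hk | hk
  · have hk2 := Nat.even_iff.mp hk
    rw [show k + 1 = (k / 2 + 1) + k / 2 by omega, sum_range_add, hupper _ (by omega),
      sum_range_succ _ (k / 2), hmid hk, add_zero, two_nsmul]
  · have hk2 := Nat.odd_iff.mp hk
    rw [show k + 1 = (k / 2 + 1) + (k / 2 + 1) by omega, sum_range_add, hupper _ (by omega),
      two_nsmul]

theorem PowerSeries.coeff_one_add_pow {R : Type*} [CommSemiring R] {G : R⟦X⟧} {d N m : ℕ}
    (hG : X ^ d ∣ G) (hm : m < d * (N + 1)) (k : ℕ) :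
    coeff m ((1 + G) ^ k) = ∑ i ∈ range (N + 1), k.choose i * coeff m (G ^ i) := by
  have hvanish (i : ℕ) (hi : N < i) : coeff m (G ^ i) = 0 :=
    X_pow_dvd_iff.mp (pow_mul (X : R⟦X⟧) d i ▸ pow_dvd_pow_of_dvd hG i) m
      (hm.trans_le (Nat.mul_le_mul_left d hi))
  have hexpand : coeff m ((1 + G) ^ k) = ∑ i ∈ range (k + 1), k.choose i * coeff m (G ^ i) := by
    rw [add_comm, add_pow, map_sum]
    refine sum_congr rfl fun i _ => ?_
    rw [one_pow, mul_one, ← map_natCast (C : R →+* R⟦X⟧), mul_comm, coeff_C_mul]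
  rw [hexpand, sum_subset (range_subset_range.mpr (by omega : k + 1 ≤ k + N + 1)),
    ← sum_subset (range_subset_range.mpr (by omega : N + 1 ≤ k + N + 1))]
  · intro i _ hi
    rw [hvanish i (by simp only [mem_range] at hi; omega), mul_zero]
  · intro i _ hi
    rw [Nat.choose_eq_zero_of_lt (by simp only [mem_range] at hi; omega), Nat.cast_zero, zero_mul]

theorem PowerSeries.rescale_exp_pow {A : Type*} [CommRing A] [Algebra ℚ A] (a : A) (j : ℕ) :
    rescale a (exp A) ^ j = rescale (j * a) (exp A) := by
  rw [← map_pow, exp_pow_eq_rescale_exp, ← RingHom.comp_apply, ← rescale_mul]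

theorem PowerSeries.coeff_rescale_exp_sub_pow (a b : ℚ) (k m : ℕ) :
    coeff m ((rescale a (exp ℚ) - rescale b (exp ℚ)) ^ k) =
      (∑ j ∈ range (k + 1), (-1) ^ j * k.choose j * (j * b + (k - j) * a) ^ m) /
        m.factorial := by
  rw [sub_eq_neg_add, add_pow, map_sum, sum_div]
  refine sum_congr rfl fun j hj => ?_
  have hterm :
      (-rescale b (exp ℚ)) ^ j * rescale a (exp ℚ) ^ (k - j) * (k.choose j : ℚ⟦X⟧) =
      C ((-1 : ℚ) ^ j * k.choose j) * rescale (j * b + (k - j) * a) (exp ℚ) := by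
    rw [neg_pow, rescale_exp_pow, rescale_exp_pow, ← Nat.cast_sub (mem_range_succ_iff.mp hj),
      ← exp_mul_exp_eq_exp_add, map_mul, map_pow, map_neg, map_one, map_natCast]
    ring
  rw [hterm, coeff_C_mul, coeff_rescale, coeff_exp, Algebra.algebraMap_self, RingHom.id_apply]
  ring

theorem exists_exp_half_sub_exp_neg_half_eq_X_mul_one_add :
    ∃ G : ℚ⟦X⟧,
      rescale (1 / 2) (exp ℚ) - rescale (-1 / 2) (exp ℚ) = X * (1 + G) ∧ X ^ 2 ∣ G := by
  set D : ℚ⟦X⟧ := rescale (1 / 2) (exp ℚ) - rescale (-1 / 2) (exp ℚ)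
  refine ⟨(mk fun p => coeff (p + 1) D) - 1, ?_, ?_⟩
  · have hD : constantCoeff D = 0 := by
      rw [← coeff_zero_eq_constantCoeff_apply, map_sub, coeff_rescale, coeff_rescale]
      simp
    conv_lhs => rw [eq_X_mul_shift_add_const D, hD, map_zero, add_zero]
    rw [add_sub_cancel]
  · rw [X_pow_dvd_iff]
    intro m hm
    interval_cases m <;> norm_num [D, coeff_rescale, coeff_exp]

theorem sum_neg_one_pow_mul_choose_mul_pow_eq_two_mul {n : ℕ} (hn : 1 ≤ n) (k : ℕ) :
    ∑ j ∈ range (k + 1), (-1 : ℚ) ^ j * k.choose j * ((k : ℚ) / 2 - j) ^ (k + 2 * n) =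
      2 * ∑ j ∈ range (k / 2 + 1),
        (-1 : ℚ) ^ j * k.choose j * ((k : ℚ) / 2 - j) ^ (k + 2 * n) := by
  refine (sum_range_succ_eq_two_nsmul_of_symm (fun j hj => ?_) fun ⟨h, hk⟩ => ?_).trans
    ((two_nsmul _).trans (two_mul _).symm)
  · obtain ⟨t, rfl⟩ := Nat.exists_eq_add_of_le hj
    have hsign : (-1 : ℚ) ^ t * (-1) ^ (j + t + 2 * n) = (-1) ^ j := by
      rw [← pow_add, show t + (j + t + 2 * n) = j + 2 * (t + n) by ring, pow_add, pow_mul,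
        neg_one_sq, one_pow, mul_one]
    rw [Nat.add_sub_cancel_left, Nat.choose_symm_add, Nat.cast_add,
      show ((j : ℚ) + t) / 2 - t = -(((j : ℚ) + t) / 2 - j) by ring,
      neg_pow (((j : ℚ) + t) / 2 - j)]
    linear_combination ((j + t).choose t * (((j : ℚ) + t) / 2 - j) ^ (j + t + 2 * n)) * hsign
  · subst hk
    rw [show (h + h) / 2 = h by omega, Nat.cast_add, add_self_div_two, sub_self,
      zero_pow (by omega), mul_zero]

theorem A_eq_factorial_mul_coeff {n : ℕ} (hn : 1 ≤ n) {F : ℚ⟦X⟧}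
    (hF : rescale (1 / 2) (exp ℚ) - rescale (-1 / 2) (exp ℚ) = X * F) (k : ℕ) :
    A n k = (2 * n).factorial * coeff (2 * n) (F ^ k) := by
  have hshift : coeff (k + 2 * n) ((X * F) ^ k) = coeff (2 * n) (F ^ k) := by
    rw [mul_pow, coeff_X_pow_mul', if_pos (by omega), Nat.add_sub_cancel_left]
  have hfact : ((k + 2 * n).factorial : ℚ) ≠ 0 := Nat.cast_ne_zero.mpr (Nat.factorial_ne_zero _)
  have hsum :
      ∑ j ∈ range (k + 1), (-1 : ℚ) ^ j * k.choose j * ((k : ℚ) / 2 - j) ^ (k + 2 * n) =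
      (k + 2 * n).factorial * coeff (2 * n) (F ^ k) := by
    rw [← hshift, ← hF, coeff_rescale_exp_sub_pow, mul_div_cancel₀ _ hfact]
    refine sum_congr rfl fun j _ => ?_
    ring
  calc A n k = (2 * n).factorial / (k + 2 * n).factorial * (2 * ∑ j ∈ range (k / 2 + 1),
        (-1 : ℚ) ^ j * k.choose j * ((k : ℚ) / 2 - j) ^ (k + 2 * n)) := by
        rw [A, add_comm (2 * n) k]
        ring
    _ = (2 * n).factorial * coeff (2 * n) (F ^ k) := by
        rw [← sum_neg_one_pow_mul_choose_mul_pow_eq_two_mul hn, hsum]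
        field_simp

/-- For every integer `n ≥ 1` there exist rationals `α_1, …, α_n` such that
for every integer `k ≥ 0`, `A(n,k) = ∑_{l=1}^{n} α_l · k^l`: the function `k ↦ A(n,k)` agrees
on the nonnegative integers with a polynomial of degree at most `n` with zero constant term. -/
theorem A_eq_polynomial (n : ℕ) (hn : 1 ≤ n) :
    ∃ α : ℕ → ℚ, ∀ k : ℕ, A n k = ∑ l ∈ Finset.Icc 1 n, α l * (k : ℚ) ^ l := by
  obtain ⟨G, hG, hXG⟩ := exists_exp_half_sub_exp_neg_half_eq_X_mul_one_add
  obtain ⟨α, hα⟩ := exists_sum_Icc_pow_eq_sum_choose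
    (fun i => ((2 * n).factorial : ℚ) * coeff (2 * n) (G ^ i))
    (by rw [pow_zero, coeff_one, if_neg (by omega), mul_zero]) n
  refine ⟨α, fun k => ?_⟩
  rw [A_eq_factorial_mul_coeff hn hG, coeff_one_add_pow hXG (N := n) (by omega), mul_sum, ← hα]
  refine sum_congr rfl fun i _ => ?_
  ring
end

section
/- For all integers n ≥ 1 and k ≥ 2, A(n,k) = (k(k−1)/((2n+k)(2n+k−1))) · A(n, k−2) + (k²/4) · (2n(2n−1)/((2n+k)(2n+k−1))) · A(n−1, k). -/
lemma nat_key (k i : ℕ) :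
    Nat.choose (k+2) (i+1) * (i+1) * (k+1-i) = (k+2) * (k+1) * Nat.choose k i := by
  have h1 : (k+2) * Nat.choose (k+1) i = Nat.choose (k+2) (i+1) * (i+1) := by
    have := Nat.add_one_mul_choose_eq (k+1) i
    simpa [Nat.succ_eq_add_one] using this
  have h2 : Nat.choose k i * (k+1) = Nat.choose (k+1) i * (k+1-i) :=
    Nat.choose_mul_succ_eq k i
  calc Nat.choose (k+2) (i+1) * (i+1) * (k+1-i)
      = (k+2) * (Nat.choose (k+1) i * (k+1-i)) := by rw [← h1]; ring
    _ = (k+2) * (Nat.choose k i * (k+1)) := by rw [h2]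
    _ = (k+2) * (k+1) * Nat.choose k i := by ring

lemma sum_key (k m : ℕ) :
    ∑ j ∈ Finset.range (k/2+2), (-1:ℚ)^j * ((k+2).choose j : ℚ) * (((k+2:ℕ):ℚ)/2 - j)^(m+2)
    = ((k+2:ℕ):ℚ) * (((k+2:ℕ):ℚ)-1) *
        ∑ j ∈ Finset.range (k/2+1), (-1:ℚ)^j * (k.choose j : ℚ) * ((k:ℚ)/2 - j)^m
      + ((k+2:ℕ):ℚ)^2/4 *
        ∑ j ∈ Finset.range (k/2+2), (-1:ℚ)^j * ((k+2).choose j : ℚ) * (((k+2:ℕ):ℚ)/2 - j)^m := by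
  have key : ∑ j ∈ Finset.range (k/2+2), (-1:ℚ)^j * ((k+2).choose j : ℚ) * (((k+2:ℕ):ℚ)/2 - j)^(m+2)
      - ((k+2:ℕ):ℚ)^2/4 *
        ∑ j ∈ Finset.range (k/2+2), (-1:ℚ)^j * ((k+2).choose j : ℚ) * (((k+2:ℕ):ℚ)/2 - j)^m
      = ∑ j ∈ Finset.range (k/2+2),
          (-1:ℚ)^j * ((k+2).choose j : ℚ) * ((j:ℚ)^2 - ((k+2:ℕ):ℚ)*j) * (((k+2:ℕ):ℚ)/2 - j)^m := by
    rw [Finset.mul_sum, ← Finset.sum_sub_distrib]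
    refine Finset.sum_congr rfl fun j _ => ?_
    push_cast
    ring
  have h0 : ∑ j ∈ Finset.range (k/2+2),
        (-1:ℚ)^j * ((k+2).choose j : ℚ) * ((j:ℚ)^2 - ((k+2:ℕ):ℚ)*j) * (((k+2:ℕ):ℚ)/2 - j)^m
      = ((k+2:ℕ):ℚ) * (((k+2:ℕ):ℚ)-1) *
        ∑ j ∈ Finset.range (k/2+1), (-1:ℚ)^j * (k.choose j : ℚ) * ((k:ℚ)/2 - j)^m := by
    rw [Finset.sum_range_succ']
    rw [Finset.mul_sum]
    have hz : (-1:ℚ)^0 * ((k+2).choose 0 : ℚ) * (((0:ℕ):ℚ)^2 - ((k+2:ℕ):ℚ)*((0:ℕ):ℚ)) * (((k+2:ℕ):ℚ)/2 - ((0:ℕ):ℚ))^m = 0 := by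
      norm_num
    rw [hz, add_zero]
    refine Finset.sum_congr rfl fun i hi => ?_
    have hi' : i ≤ k := by
      have := Finset.mem_range.mp hi
      omega
    have hb : (((k+2:ℕ):ℚ)/2 - ((i+1:ℕ):ℚ)) = ((k:ℚ)/2 - (i:ℚ)) := by push_cast; ring
    rw [hb]
    have hc : ((k+2).choose (i+1) : ℚ) * ((i:ℚ)+1) * ((k:ℚ)+1-(i:ℚ))
        = ((k:ℚ)+2) * ((k:ℚ)+1) * (k.choose i : ℚ) := by
      have := nat_key k i
      have h := congrArg (fun x : ℕ => (x : ℚ)) this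
      push_cast [Nat.cast_sub (show i ≤ k+1 by omega)] at h
      linarith [h]
    push_cast
    have hsign : (-1:ℚ)^(i+1) = -(-1:ℚ)^i := by ring
    rw [hsign]
    linear_combination ((-1:ℚ)^i * ((k:ℚ)/2 - (i:ℚ))^m) * hc
  linarith [key, h0]


/-- For all integers `n ≥ 1` and `k ≥ 2`,
`A(n,k) = (k(k−1)/((2n+k)(2n+k−1))) · A(n,k−2)
  + (k²/4)·(2n(2n−1)/((2n+k)(2n+k−1))) · A(n−1,k)`. -/
theorem A_recurrence (n k : ℕ) (hn : 1 ≤ n) (hk : 2 ≤ k) :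
    A n k =
      ((k : ℚ) * ((k : ℚ) - 1) / ((2 * (n : ℚ) + k) * (2 * (n : ℚ) + k - 1))) * A n (k - 2) +
      ((k : ℚ) ^ 2 / 4) *
        (2 * (n : ℚ) * (2 * (n : ℚ) - 1) / ((2 * (n : ℚ) + k) * (2 * (n : ℚ) + k - 1))) *
        A (n - 1) k := by

  obtain ⟨n1, rfl⟩ : ∃ n1, n = n1 + 1 := ⟨n-1, by omega⟩
  obtain ⟨k2, rfl⟩ : ∃ k2, k = k2 + 2 := ⟨k-2, by omega⟩
  unfold A
  simp only [Nat.add_sub_cancel]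
  rw [show (k2+2)/2 + 1 = k2/2+2 from by omega,
      show k2+2+2*(n1+1) = k2+2*n1+2+2 from by omega,
      show k2+2*(n1+1) = k2+2*n1+2 from by omega,
      show k2+2+2*n1 = k2+2*n1+2 from by omega,
      show 2*(n1+1)+(k2+2) = 2*n1+k2+4 from by omega,
      show 2*(n1+1)+k2 = 2*n1+k2+2 from by omega,
      show 2*n1+(k2+2) = 2*n1+k2+2 from by omega,
      show 2*(n1+1) = 2*n1+2 from by omega]
  have hF4 : ((2*n1+k2+4).factorial : ℚ)
      = (2*(n1:ℚ)+(k2:ℚ)+4) * (2*(n1:ℚ)+(k2:ℚ)+3) * ((2*n1+k2+2).factorial : ℚ) := by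
    rw [show 2*n1+k2+4 = (2*n1+k2+2)+1+1 from by omega, Nat.factorial_succ, Nat.factorial_succ]
    push_cast; ring
  have hF2 : ((2*n1+2).factorial : ℚ)
      = (2*(n1:ℚ)+2) * (2*(n1:ℚ)+1) * ((2*n1).factorial : ℚ) := by
    rw [show 2*n1+2 = (2*n1)+1+1 from by omega, Nat.factorial_succ, Nat.factorial_succ]
    push_cast; ring
  rw [hF4, hF2, sum_key k2 (k2+2*n1+2)]
  have hz1 : ((2*n1+k2+2).factorial : ℚ) ≠ 0 := Nat.cast_ne_zero.2 (Nat.factorial_ne_zero _)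
  have hz2 : ((2*n1).factorial : ℚ) ≠ 0 := Nat.cast_ne_zero.2 (Nat.factorial_ne_zero _)
  have hz3 : (2*(n1:ℚ)+(k2:ℚ)+4) ≠ 0 := by positivity
  have hz4 : (2*(n1:ℚ)+(k2:ℚ)+3) ≠ 0 := by positivity
  set S2 := ∑ j ∈ Finset.range (k2/2+1), (-1:ℚ)^j * (k2.choose j : ℚ) * ((k2:ℚ)/2 - (j:ℚ))^(k2+2*n1+2) with hS2
  set S0 := ∑ j ∈ Finset.range (k2/2+2), (-1:ℚ)^j * ((k2+2).choose j : ℚ) * (((k2+2:ℕ):ℚ)/2 - (j:ℚ))^(k2+2*n1+2) with hS0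
  set Fb := ((2*n1+k2+2).factorial : ℚ) with hFb
  set Fn := ((2*n1).factorial : ℚ) with hFn
  have hc0 : (0:ℚ) ≤ (n1:ℚ) := Nat.cast_nonneg _
  have hc1 : (0:ℚ) ≤ (k2:ℚ) := Nat.cast_nonneg _
  have hz5 : 2*((n1:ℚ)+1)+((k2:ℚ)+2) ≠ 0 := by ring_nf; intro h; nlinarith
  have hz6 : 2*((n1:ℚ)+1)+((k2:ℚ)+2)-1 ≠ 0 := by intro h; nlinarith
  push_cast
  field_simp
  ring
end

section
/- Let n ≥ 1 be an integer and let p ∈ ℚ[X] be any polynomial of degree at most n with p(0) = 0. Then for every integer k ≥ 1, p(−k) = −k · C(n+k, n) · ∑_{l=1}^{n} ((−1)^{l+1}/(l+k)) · C(n,l) · p(l). -/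
/-!
Interpolate `p` at the nodes `0, 1, …, n`; the node `0` contributes nothing since `p(0) = 0`.
In barycentric form the Lagrange basis polynomial of node `i` at `x = -k` is
`ℓ(x) · wᵢ / (x - i)`, where the nodal polynomial gives `ℓ(-k) = (-1)^(n+1) k (k+1) ⋯ (k+n)`
and the nodal weight is `wᵢ = (-1)^(n-i) / (i! (n-i)!)`; multiplying out yields the coefficient
`-k C(n+k, n) (-1)^(i+1) C(n, i) / (i + k)`.
-/

open Finset Polynomial Lagrange Nat

theorem Nat.ascFactorial_add_one_eq_mul_factorial_mul_choose (k n : ℕ) :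
    k.ascFactorial (n + 1) = k * (n ! * (n + k).choose n) := by
  rw [ascFactorial_succ, ← succ_ascFactorial, ascFactorial_eq_factorial_mul_choose, add_comm k]

section NaturalNodes

variable {R F : Type*} [CommRing R] [Field F]

theorem prod_range_natCast_sub_eq_factorial (i : ℕ) :
    ∏ j ∈ range i, ((i : R) - j) = i ! := by
  rw [prod_range_natCast_sub, ← descFactorial_eq_prod_range, descFactorial_self]

theorem prod_Ico_natCast_sub (i n : ℕ) :
    ∏ j ∈ Ico (i + 1) (n + 1), ((i : R) - j) = (-1) ^ (n - i) * (n - i)! := by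
  rw [prod_Ico_eq_prod_range, show n + 1 - (i + 1) = n - i by omega]
  calc ∏ m ∈ range (n - i), ((i : R) - (i + 1 + m : ℕ))
      = ∏ m ∈ range (n - i), -((m + 1 : ℕ) : R) :=
        prod_congr rfl fun m _ => by push_cast; ring
    _ = (-1) ^ (n - i) * (n - i)! := by
        rw [prod_neg, card_range, ← cast_prod, prod_range_add_one_eq_factorial]

theorem prod_range_erase_natCast_sub {n i : ℕ} (hi : i ≤ n) :
    ∏ j ∈ (range (n + 1)).erase i, ((i : R) - j) = (-1 : R) ^ (n - i) * (i ! * (n - i)!) := by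
  have hsplit : (range (n + 1)).erase i = range i ∪ Ico (i + 1) (n + 1) := by
    ext j
    simp only [mem_erase, mem_range, mem_union, mem_Ico]
    omega
  have hdisj : Disjoint (range i) (Ico (i + 1) (n + 1)) :=
    disjoint_left.2 fun j h₁ h₂ => by rw [mem_range] at h₁; rw [mem_Ico] at h₂; omega
  rw [hsplit, prod_union hdisj, prod_range_natCast_sub_eq_factorial, prod_Ico_natCast_sub]
  ring

theorem eval_neg_natCast_nodal_range (k n : ℕ) :
    (nodal (range n) (Nat.cast : ℕ → R)).eval (-(k : R)) = (-1 : R) ^ n * k.ascFactorial n := by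
  have hterm : ∀ j : ℕ, -(k : R) - j = -((k + j : ℕ) : R) := fun j => by push_cast; ring
  simp_rw [eval_nodal, hterm]
  rw [prod_neg, card_range, ascFactorial_eq_prod_range, cast_prod]

theorem nodalWeight_range_natCast {n i : ℕ} (hi : i ≤ n) :
    nodalWeight (range (n + 1)) (Nat.cast : ℕ → F) i =
      ((-1 : F) ^ (n - i) * (i ! * (n - i)!))⁻¹ := by
  rw [nodalWeight, prod_inv_distrib, prod_range_erase_natCast_sub hi]

theorem eval_neg_natCast_basis_range [CharZero F] {n i : ℕ} (k : ℕ) (hi : 0 < i) (hin : i ≤ n) :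
    (Lagrange.basis (range (n + 1)) (Nat.cast : ℕ → F) i).eval (-(k : F)) =
      -(k : F) * (n + k).choose n * ((-1 : F) ^ (i + 1) / (i + k) * n.choose i) := by
  have hik : (i : F) + k ≠ 0 := by exact_mod_cast (by omega : i + k ≠ 0)
  have hnode : -(k : F) ≠ i := fun h => hik (by rw [← h]; ring)
  have hsign : (-1 : F) ^ (n + 1) = (-1) ^ (n - i) * (-1) ^ (i + 1) := by
    rw [← pow_add, show n - i + (i + 1) = n + 1 by omega]
  rw [eval_basis_not_at_node (mem_range.2 (by omega)) hnode, eval_neg_natCast_nodal_range,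
    nodalWeight_range_natCast hin, ascFactorial_add_one_eq_mul_factorial_mul_choose,
    cast_choose F hin, hsign, show -(k : F) - i = -(i + k) by ring]
  push_cast
  field_simp

end NaturalNodes

theorem eval_neg_of_polynomial_general (n : ℕ) (p : Polynomial ℚ)
    (hdeg : p.natDegree ≤ n) (h0 : p.eval 0 = 0) (k : ℕ) :
    p.eval (-(k : ℚ)) =
      -(k : ℚ) * (Nat.choose (n + k) n : ℚ) *
        ∑ l ∈ Finset.Icc 1 n,
          ((-1 : ℚ) ^ (l + 1) / ((l : ℚ) + (k : ℚ))) * (Nat.choose n l : ℚ) *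
            p.eval (l : ℚ) := by
  have hinj : Set.InjOn (Nat.cast : ℕ → ℚ) (range (n + 1)) := cast_injective.injOn
  have hdeg' : p.degree < #(range (n + 1)) := by
    rw [card_range]
    exact (degree_le_of_natDegree_le hdeg).trans_lt (by exact_mod_cast n.lt_add_one)
  have hinterp := congrArg (eval (-(k : ℚ))) (eq_interpolate hinj hdeg')
  rw [interpolate_apply, eval_finsetSum, sum_range_eq_add_Ico _ n.add_one_pos,
    Ico_add_one_right_eq_Icc] at hinterp
  rw [hinterp, mul_sum]
  simp only [eval_mul, eval_C, cast_zero, h0, zero_mul, zero_add]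
  refine sum_congr rfl fun i hi => ?_
  rw [eval_neg_natCast_basis_range k (mem_Icc.1 hi).1 (mem_Icc.1 hi).2]
  ring

/-- Let `n ≥ 1` and let `p ∈ ℚ[X]` be any polynomial of degree at most `n`
with `p(0) = 0`. Then for every integer `k ≥ 1`,
`p(−k) = −k · C(n+k, n) · ∑_{l=1}^{n} ((−1)^{l+1}/(l+k)) · C(n,l) · p(l)`. -/
theorem eval_neg_of_polynomial (n : ℕ) (hn : 1 ≤ n) (p : Polynomial ℚ)
    (hdeg : p.natDegree ≤ n) (h0 : p.eval 0 = 0) (k : ℕ) (hk : 1 ≤ k) :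
    p.eval (-(k : ℚ)) =
      -(k : ℚ) * (Nat.choose (n + k) n : ℚ) *
        ∑ l ∈ Finset.Icc 1 n,
          ((-1 : ℚ) ^ (l + 1) / ((l : ℚ) + (k : ℚ))) * (Nat.choose n l : ℚ) *
            p.eval (l : ℚ) :=
  eval_neg_of_polynomial_general n p hdeg h0 k
end

section
/- For all integers n ≥ 1, k ≥ 1 and m with 1 ≤ m ≤ n, ∑_{l=1}^{n} ((−1)^l/(k+l)) · C(n,l) · l^m = (−1)^m · k^{m−1} / C(n+k, k). -/
/-!
Dividing `l ^ m` by `k + l` leaves a quotient that is a polynomial in `l` of degree `m - 1 < n`,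
which the alternating binomial sum `∑ (-1)^l C(n,l) ·` annihilates (an `n`-th forward difference),
and the remainder `(-k) ^ m`. What is left is the partial fraction expansion
`∑_{l=0}^{n} (-1)^l C(n,l) / (x + l) = n! / (x (x+1) ⋯ (x+n))`, which at `x = k` equals
`1 / (k C(n+k, k))`.
-/

open Finset Polynomial Nat

theorem sum_range_neg_one_pow_mul_choose_mul_pow_eq_zero {R : Type*} [CommRing R] {n j : ℕ}
    (h : j < n) : ∑ l ∈ range (n + 1), (-1 : R) ^ l * n.choose l * (l : R) ^ j = 0 := by
  have hdiff := congr_fun (fwdDiff_iter_pow_eq_zero_of_lt (R := R) h) 0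
  simp only [fwdDiff_iter_eq_sum_shift, zsmul_eq_mul, zero_add, nsmul_eq_mul, mul_one,
    Int.cast_mul, Int.cast_pow, Int.cast_neg, Int.cast_one, Int.cast_natCast,
    Pi.zero_apply] at hdiff
  calc _ = (-1) ^ n * ∑ l ∈ range (n + 1), (-1 : R) ^ (n - l) * n.choose l * (l : R) ^ j := by
        rw [mul_sum]
        refine sum_congr rfl fun l hl ↦ ?_
        obtain ⟨d, rfl⟩ := Nat.exists_eq_add_of_le (mem_range_succ_iff.1 hl)
        have hsq : ((-1 : R) ^ d) ^ 2 = 1 := by rw [← pow_mul, pow_mul', neg_one_sq, one_pow]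
        rw [Nat.add_sub_cancel_left]
        linear_combination (-(-1 : R) ^ l * (l + d).choose l * (l : R) ^ j) * hsq
    _ = 0 := by rw [hdiff, mul_zero]

theorem sum_range_succ_neg_one_pow_mul_choose {R : Type*} [Ring R] (n : ℕ) (f : ℕ → R) :
    ∑ l ∈ range (n + 1 + 1), (-1 : R) ^ l * (n + 1).choose l * f l =
      ∑ l ∈ range (n + 1), (-1 : R) ^ l * n.choose l * (f l - f (l + 1)) := by
  have hshift : ∑ l ∈ range (n + 1), (-1 : R) ^ l * n.choose l * f l =
      ∑ l ∈ range (n + 1), (-1 : R) ^ (l + 1) * n.choose (l + 1) * f (l + 1) + f 0 := by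
    calc _ = ∑ l ∈ range (n + 2), (-1 : R) ^ l * n.choose l * f l := by
          rw [sum_range_succ _ (n + 1), Nat.choose_succ_self, Nat.cast_zero, mul_zero, zero_mul,
            add_zero]
      _ = _ := by simp [sum_range_succ']
  simp_rw [mul_sub, sum_sub_distrib]
  rw [sum_range_succ', hshift]
  simp only [Nat.choose_succ_succ, Nat.cast_add, mul_add, add_mul, sum_add_distrib, pow_succ,
    mul_neg, mul_one, neg_mul, sum_neg_distrib, pow_zero, choose_zero_right, cast_one, one_mul]
  abel

theorem sum_range_neg_one_pow_mul_choose_div_add {K : Type*} [Field K] (n : ℕ) {x : K}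
    (hx : (ascPochhammer K (n + 1)).eval x ≠ 0) :
    ∑ l ∈ range (n + 1), (-1 : K) ^ l * n.choose l / (x + l) =
      n ! / (ascPochhammer K (n + 1)).eval x := by
  induction n generalizing x with
  | zero => simp
  | succ n ih =>
    have hright : (ascPochhammer K (n + 1 + 1)).eval x =
        (ascPochhammer K (n + 1)).eval x * (x + (n + 1)) := by
      rw [ascPochhammer_succ_eval]; push_cast; ring
    have hleft : (ascPochhammer K (n + 1 + 1)).eval x =
        x * (ascPochhammer K (n + 1)).eval (x + 1) := by
      rw [ascPochhammer_succ_left, eval_mul, eval_comp]; simp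
    have h₁ : (ascPochhammer K (n + 1)).eval x ≠ 0 := left_ne_zero_of_mul (hright ▸ hx)
    have h₂ : (ascPochhammer K (n + 1)).eval (x + 1) ≠ 0 := right_ne_zero_of_mul (hleft ▸ hx)
    simp_rw [div_eq_mul_inv _ (x + _)]
    rw [sum_range_succ_neg_one_pow_mul_choose n (fun l ↦ (x + l)⁻¹)]
    have hshift (l : ℕ) : x + ↑(l + 1) = x + 1 + l := by push_cast; ring
    simp_rw [mul_sub, sum_sub_distrib, hshift, ← div_eq_mul_inv, ih h₁, ih h₂]
    rw [div_sub_div _ _ h₁ h₂, div_eq_div_iff (mul_ne_zero h₁ h₂) hx, Nat.factorial_succ]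
    push_cast
    linear_combination (n ! : K) * ((ascPochhammer K (n + 1)).eval (x + 1) * hright -
      (ascPochhammer K (n + 1)).eval x * hleft)

theorem pow_div_add_eq_geom_sum₂_add {K : Type*} [Field K] {x y : K} (h : x + y ≠ 0) (m : ℕ) :
    y ^ m / (x + y) = ∑ i ∈ range m, y ^ i * (-x) ^ (m - 1 - i) + (-x) ^ m / (x + y) := by
  have hgeom := geom_sum₂_mul y (-x) m
  rw [sub_neg_eq_add, add_comm y] at hgeom
  rw [← sub_eq_iff_eq_add, ← sub_div, ← hgeom, mul_div_cancel_right₀ _ h]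

theorem sum_range_neg_one_pow_mul_choose_mul_pow_div_add {K : Type*} [Field K] {n m : ℕ}
    (hm : m ≤ n) {x : K} (hx : ∀ l ≤ n, x + l ≠ 0) :
    ∑ l ∈ range (n + 1), (-1 : K) ^ l * n.choose l * (l : K) ^ m / (x + l) =
      (-x) ^ m * ∑ l ∈ range (n + 1), (-1 : K) ^ l * n.choose l / (x + l) := by
  have hquotient : ∀ i ∈ range m,
      ∑ l ∈ range (n + 1), (-1 : K) ^ l * n.choose l * ((l : K) ^ i * (-x) ^ (m - 1 - i)) = 0 :=
    fun i hi ↦ by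
      simp_rw [← mul_assoc, ← sum_mul]
      rw [sum_range_neg_one_pow_mul_choose_mul_pow_eq_zero (by simp at hi; omega), zero_mul]
  calc _ = ∑ l ∈ range (n + 1), (-1 : K) ^ l * n.choose l *
          (∑ i ∈ range m, (l : K) ^ i * (-x) ^ (m - 1 - i) + (-x) ^ m / (x + l)) :=
        sum_congr rfl fun l hl ↦ by
          rw [mul_div_assoc, pow_div_add_eq_geom_sum₂_add (hx l (mem_range_succ_iff.1 hl))]
    _ = _ := by
      simp_rw [mul_add, sum_add_distrib, mul_sum]
      rw [sum_comm, sum_eq_zero hquotient, zero_add]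
      exact sum_congr rfl fun l _ ↦ by ring

theorem ascPochhammer_eval_natCast_succ {S : Type*} [CommSemiring S] (n k : ℕ) :
    (ascPochhammer S (n + 1)).eval (k : S) = k * n ! * (n + k).choose k := by
  rw [ascPochhammer_succ_left, eval_mul, eval_comp, eval_X, eval_add, eval_X, eval_one,
    ← Nat.cast_add_one, ascPochhammer_nat_eq_natCast_ascFactorial,
    ascFactorial_eq_factorial_mul_choose, add_comm k n, ← choose_symm_add]
  push_cast
  ring

theorem sum_inv_shift_binom_pow_general (n k m : ℕ) (hk : 1 ≤ k)
    (hm : 1 ≤ m) (hmn : m ≤ n) :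
    ∑ l ∈ Finset.Icc 1 n,
        ((-1 : ℚ) ^ l / ((k : ℚ) + (l : ℚ))) * (Nat.choose n l : ℚ) * (l : ℚ) ^ m =
      (-1 : ℚ) ^ m * (k : ℚ) ^ (m - 1) / (Nat.choose (n + k) k : ℚ) := by
  have hk₀ : (0 : ℚ) < k := by exact_mod_cast hk
  calc _ = ∑ l ∈ range (n + 1), (-1 : ℚ) ^ l * n.choose l * (l : ℚ) ^ m / (k + l) := by
        rw [range_succ_eq_Icc_zero, ← insert_Icc_add_one_left_eq_Icc (Nat.zero_le n),
          sum_insert (by simp), zero_add]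
        simp only [CharP.cast_eq_zero, zero_pow (by omega : m ≠ 0), mul_zero, zero_div, zero_add]
        exact sum_congr rfl fun l _ ↦ by ring
    _ = (-k) ^ m * (n ! / (ascPochhammer ℚ (n + 1)).eval (k : ℚ)) := by
        rw [sum_range_neg_one_pow_mul_choose_mul_pow_div_add hmn fun l _ ↦ by positivity,
          sum_range_neg_one_pow_mul_choose_div_add n (ascPochhammer_pos _ _ hk₀).ne']
    _ = _ := by
        obtain ⟨j, rfl⟩ := Nat.exists_eq_add_of_le' hm
        rw [ascPochhammer_eval_natCast_succ, Nat.add_sub_cancel, neg_pow]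
        have : ((n + k).choose k : ℚ) ≠ 0 :=
          Nat.cast_ne_zero.2 (Nat.choose_pos (Nat.le_add_left k n)).ne'
        field_simp
        ring

/-- For all integers `n ≥ 1`, `k ≥ 1` and `1 ≤ m ≤ n`,
`∑_{l=1}^{n} ((−1)^l/(k+l)) · C(n,l) · l^m = (−1)^m · k^{m−1} / C(n+k, k)`. -/
theorem sum_inv_shift_binom_pow (n k m : ℕ) (hn : 1 ≤ n) (hk : 1 ≤ k)
    (hm : 1 ≤ m) (hmn : m ≤ n) :
    ∑ l ∈ Finset.Icc 1 n,
        ((-1 : ℚ) ^ l / ((k : ℚ) + (l : ℚ))) * (Nat.choose n l : ℚ) * (l : ℚ) ^ m =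
      (-1 : ℚ) ^ m * (k : ℚ) ^ (m - 1) / (Nat.choose (n + k) k : ℚ) :=
  sum_inv_shift_binom_pow_general n k m hk hm hmn
end

section
/- For every integer n ≥ 1, B_{2n} = (1/(2^{2n} − 2)) · ∑_{l=1}^{n} (−1)^{l+1} · a(n,l) · C(2n+l, 2n)^{−1}. -/
/-!
Put `y = x²` and `sinh x = x (1 + s(y))`, `cosh x - 1 = c(y)`. Differentiating `sinh` gives
`2y s' + s = c`, hence `2y (s^(l+1))' + (l+1) s^(l+1) = (l+1) s^l c`; comparing coefficients of
`yⁿ` is exactly Riordan's recursion, so `[yⁿ] s^l = a(n,l) l! / (2n+l)!`. On the other hand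
`1 / (1 + s(x²)) = x / sinh x = 2x/(eˣ-1) - 2x/(e²ˣ-1) = ∑ (2 - 2^k) B_k x^k / k!`, and
expanding `1 / (1 + s) = ∑ (-s)^l`, where only `l ≤ n` contributes to `yⁿ`, gives
`(2 - 2^(2n)) B_{2n} / (2n)! = ∑_{l ≤ n} (-1)^l a(n,l) l! / (2n+l)!`.
-/

open PowerSeries Finset
open scoped Nat

/-- Riordan's coefficients `a(n,l)`: `a(0,0) = 1`, `a(n,0) = 0` for `n ≥ 1`, and for `l ≥ 1`,
`a(n,l) = ∑_{i=l−1}^{n−1} a(i,l−1) · C(2n+l−1, 2n−2i)`. -/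
def a : ℕ → ℕ → ℚ
  | 0, 0 => 1
  | _ + 1, 0 => 0
  | n, l + 1 => ∑ i ∈ Finset.Ico l n, a i l * (Nat.choose (2 * n + l) (2 * n - 2 * i) : ℚ)

theorem a_of_lt {i l : ℕ} (h : i < l) : a i l = 0 := by
  obtain ⟨l, rfl⟩ : ∃ k, l = k + 1 := ⟨l - 1, by omega⟩
  rw [a, Ico_eq_empty_of_le (by omega), sum_empty]

theorem a_zero_right {n : ℕ} (hn : n ≠ 0) : a n 0 = 0 := by
  obtain ⟨m, rfl⟩ := Nat.exists_eq_succ_of_ne_zero hn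
  rfl

theorem a_succ_eq_sum_range (n l : ℕ) :
    a n (l + 1) = ∑ i ∈ range n, a i l * ((2 * n + l).choose (2 * n - 2 * i) : ℚ) := by
  rw [a, range_eq_Ico]
  refine sum_subset (Ico_subset_Ico_left l.zero_le) fun i _ hi => ?_
  rw [a_of_lt (by simp_all), zero_mul]

theorem coeff_X_mul_derivative {R : Type*} [CommSemiring R] (f : R⟦X⟧) (n : ℕ) :
    coeff n (X * d⁄dX R f) = n * coeff n f := by
  cases n with
  | zero => simp
  | succ n => rw [coeff_succ_X_mul, coeff_derivative]; push_cast; ring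

/-- `sinh x = x * (1 + sinhTail (x²))` and `cosh x - 1 = coshTail (x²)`. -/
noncomputable def sinhTail : ℚ⟦X⟧ := mk fun k => if k = 0 then 0 else ((2 * k + 1)! : ℚ)⁻¹

noncomputable def coshTail : ℚ⟦X⟧ := mk fun k => if k = 0 then 0 else ((2 * k)! : ℚ)⁻¹

theorem two_mul_X_mul_derivative_sinhTail_add_self :
    2 * X * d⁄dX ℚ sinhTail + sinhTail = coshTail := by
  ext k
  rw [map_add, mul_assoc, show (2 : ℚ⟦X⟧) = C 2 from rfl, coeff_C_mul, coeff_X_mul_derivative]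
  simp only [sinhTail, coshTail, coeff_mk]
  split_ifs with hk
  · simp
  · rw [show 2 * k + 1 = (2 * k).succ from rfl, Nat.factorial_succ]
    field_simp
    push_cast
    ring

theorem two_mul_X_mul_derivative_sinhTail_pow_add (l : ℕ) :
    C 2 * (X * d⁄dX ℚ (sinhTail ^ (l + 1))) + C ((l : ℚ) + 1) * sinhTail ^ (l + 1) =
      C ((l : ℚ) + 1) * (sinhTail ^ l * coshTail) := by
  rw [← two_mul_X_mul_derivative_sinhTail_add_self, derivative_pow]
  simp only [map_add, map_natCast, map_one, map_ofNat, Nat.add_sub_cancel, Nat.cast_succ]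
  ring

theorem coeff_sinhTail_pow_succ (l n : ℕ) :
    (2 * n + l + 1) * coeff n (sinhTail ^ (l + 1)) =
      (l + 1) * coeff n (sinhTail ^ l * coshTail) := by
  have h := congrArg (coeff n) (two_mul_X_mul_derivative_sinhTail_pow_add l)
  rw [map_add, coeff_C_mul, coeff_C_mul, coeff_C_mul, coeff_X_mul_derivative] at h
  linear_combination h

theorem coeff_sinhTail_pow (l n : ℕ) :
    coeff n (sinhTail ^ l) = a n l * l ! / (2 * n + l)! := by
  induction l generalizing n with
  | zero => cases n <;> simp [coeff_one, a]
  | succ l ih =>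
    have h := coeff_sinhTail_pow_succ l n
    rw [coeff_mul, Nat.sum_antidiagonal_eq_sum_range_succ_mk, sum_range_succ] at h
    simp only [ih, coshTail, coeff_mk, Nat.sub_self, if_pos, mul_zero, add_zero] at h
    have hterm : ∀ i ∈ range n, a i l * l ! / (2 * i + l)! *
        (if n - i = 0 then 0 else ((2 * (n - i))! : ℚ)⁻¹) =
          a i l * ((2 * n + l).choose (2 * n - 2 * i) : ℚ) * (l ! / (2 * n + l)!) := by
      intro i hi
      have hi : i < n := mem_range.mp hi
      rw [if_neg (by omega), Nat.cast_choose ℚ (by omega),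
        show 2 * n + l - (2 * n - 2 * i) = 2 * i + l by omega,
        show 2 * (n - i) = 2 * n - 2 * i by omega]
      field_simp
    rw [sum_congr rfl hterm, ← sum_mul, ← a_succ_eq_sum_range] at h
    rw [show 2 * n + (l + 1) = (2 * n + l).succ from rfl, Nat.factorial_succ, Nat.factorial_succ,
      eq_div_iff (by positivity)]
    push_cast
    field_simp at h
    linear_combination h

theorem constantCoeff_sinhTail : constantCoeff sinhTail = 0 := by
  simp [sinhTail]

theorem coeff_inv_one_add {K : Type*} [Field K] {s : K⟦X⟧} (hs : constantCoeff s = 0) (n : ℕ) :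
    coeff n (1 + s)⁻¹ = ∑ l ∈ range (n + 1), (-1) ^ l * coeff n (s ^ l) := by
  have hunit : constantCoeff (1 + s) ≠ 0 := by simp [hs]
  have hgeom : (1 + s) * ∑ l ∈ range (n + 1), (-s) ^ l = 1 - (-s) ^ (n + 1) := by
    simpa using mul_neg_geom_sum (-s) (n + 1)
  have htail : X ^ (n + 1) ∣ (1 + s)⁻¹ * (-s) ^ (n + 1) :=
    (pow_dvd_pow_of_dvd (dvd_neg.mpr (X_dvd_iff.mpr hs)) _).mul_left _
  have hsum : ∑ l ∈ range (n + 1), (-s) ^ l = (1 + s)⁻¹ - (1 + s)⁻¹ * (-s) ^ (n + 1) := by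
    rw [← mul_one_sub, ← hgeom, ← mul_assoc, PowerSeries.inv_mul_cancel _ hunit, one_mul]
  have hcoeff_tail : coeff n ((1 + s)⁻¹ * (-s) ^ (n + 1)) = 0 :=
    X_pow_dvd_iff.mp htail n n.lt_succ_self
  rw [← eq_sub_iff_add_eq.mp hsum, map_add, hcoeff_tail, add_zero, map_sum]
  refine sum_congr rfl fun l _ => ?_
  rw [neg_pow, ← map_one (C (R := K)), ← map_neg, ← map_pow, coeff_C_mul]

theorem two_mul_X_mul_expand_one_add_sinhTail :
    C 2 * (X * expand 2 two_ne_zero (1 + sinhTail)) = exp ℚ - rescale (-1) (exp ℚ) := by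
  ext m
  rw [map_sub, coeff_rescale, coeff_exp]
  rcases m with _ | m
  · simp
  rw [coeff_C_mul, coeff_succ_X_mul]
  rcases Nat.even_or_odd' m with ⟨k, rfl | rfl⟩
  · rw [coeff_expand_mul]
    rcases eq_or_ne k 0 with rfl | hk
    · simp [constantCoeff_sinhTail]
      norm_num
    · simp [sinhTail, hk, pow_succ]
      ring
  · rw [coeff_expand_of_not_dvd _ _ _ (by omega)]
    simp [pow_succ, pow_mul]

/-- `2x / (eˣ - 1) - 2x / (e²ˣ - 1) = x / sinh x`. -/
noncomputable def xDivSinh : ℚ⟦X⟧ :=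
  C 2 * bernoulliPowerSeries ℚ - rescale 2 (bernoulliPowerSeries ℚ)

theorem coeff_xDivSinh (k : ℕ) : coeff k xDivSinh = (2 - 2 ^ k) * bernoulli k / k ! := by
  simp only [xDivSinh, map_sub, coeff_C_mul, coeff_rescale, bernoulliPowerSeries, coeff_mk,
    Algebra.algebraMap_self, RingHom.id_apply]
  ring

theorem expand_one_add_sinhTail_mul_xDivSinh :
    expand 2 two_ne_zero (1 + sinhTail) * xDivSinh = 1 := by
  have hB := bernoulliPowerSeries_mul_exp_sub_one ℚ
  have hB2 : rescale 2 (bernoulliPowerSeries ℚ) * (exp ℚ ^ 2 - 1) = C 2 * X := by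
    simpa [exp_pow_eq_rescale_exp, rescale_X] using congrArg (rescale (2 : ℚ)) hB
  have hexp : exp ℚ * rescale (-1) (exp ℚ) = 1 := by
    simpa using exp_mul_exp_eq_exp_add (1 : ℚ) (-1)
  have hsinh := two_mul_X_mul_expand_one_add_sinhTail
  refine mul_left_cancel₀ (by simp : (C 2 * X : ℚ⟦X⟧) ≠ 0) ?_
  set E := exp ℚ
  set F := rescale (-1) E
  set B := bernoulliPowerSeries ℚ
  set B2 := rescale 2 B
  rw [xDivSinh, mul_one]
  linear_combination (C 2 * F * (E + 1)) * hB - F * hB2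
    + (-(C 2 * B * E) + B2 * E + C 2 * X) * hexp + (C 2 * B - B2) * hsinh

theorem expand_inv_one_add_sinhTail : expand 2 two_ne_zero (1 + sinhTail)⁻¹ = xDivSinh :=
  left_inv_eq_right_inv
    (by rw [← map_mul, PowerSeries.inv_mul_cancel _ (by simp [constantCoeff_sinhTail]), map_one])
    expand_one_add_sinhTail_mul_xDivSinh

theorem bernoulli_two_mul_eq_sum (n : ℕ) :
    (2 - 2 ^ (2 * n)) * bernoulli (2 * n) / (2 * n)! =
      ∑ l ∈ range (n + 1), (-1) ^ l * (a n l * l ! / (2 * n + l)!) := by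
  rw [← coeff_xDivSinh, ← expand_inv_one_add_sinhTail, coeff_expand_mul,
    coeff_inv_one_add constantCoeff_sinhTail]
  simp_rw [coeff_sinhTail_pow]

theorem inv_cast_add_choose {K : Type*} [DivisionSemiring K] [CharZero K] (m l : ℕ) :
    (((m + l).choose m : ℕ) : K)⁻¹ = m ! * l ! / (m + l)! := by
  rw [Nat.cast_add_choose, inv_div]

/-- For every integer `n ≥ 1`,
`B_{2n} = (1/(2^{2n} − 2)) · ∑_{l=1}^{n} (−1)^{l+1} · a(n,l) · C(2n+l, 2n)⁻¹`. -/
theorem bernoulli_eq_riordan_sum (n : ℕ) (hn : 1 ≤ n) :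
    bernoulli (2 * n) =
      (1 / ((2 : ℚ) ^ (2 * n) - 2)) *
        ∑ l ∈ Finset.Icc 1 n,
          (-1 : ℚ) ^ (l + 1) * a n l * ((Nat.choose (2 * n + l) (2 * n) : ℚ))⁻¹ := by
  have hsum := bernoulli_two_mul_eq_sum n
  rw [range_eq_Ico, sum_eq_sum_Ico_succ_bot (Nat.zero_lt_succ n), zero_add, Nat.succ_eq_add_one,
    Ico_add_one_right_eq_Icc, a_zero_right (by omega), zero_mul, zero_div, mul_zero, zero_add]
    at hsum
  have h2n : (2 : ℚ) ^ (2 * n) - 2 ≠ 0 := by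
    have : (2 : ℚ) ^ 2 ≤ 2 ^ (2 * n) := pow_le_pow_right₀ one_le_two (by omega)
    linarith
  have hsum' : ∑ l ∈ Icc 1 n, (-1 : ℚ) ^ (l + 1) * a n l * ((2 * n + l).choose (2 * n) : ℚ)⁻¹ =
      -(2 * n)! * ∑ l ∈ Icc 1 n, (-1) ^ l * (a n l * l ! / (2 * n + l)!) := by
    rw [mul_sum]
    refine sum_congr rfl fun l _ => ?_
    rw [inv_cast_add_choose]
    ring
  rw [hsum', ← hsum]
  field_simp
  ring
end

section
/- ζ′(3) = 2π² · ζ″(−2) + (ln(2π) − 3/2 + γ) · ζ(3), where ζ′ and ζ″ denote the first and second derivatives of the Riemann zeta function and γ is the Euler–Mascheroni constant. -/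
open Complex Topology
open scoped Real

/-! Differentiate the functional equation `ζ(1 - s) = G(s) cos(πs/2)`, where
`G(s) = 2 (2π)^(-s) Γ(s) ζ(s)`, twice at `s = 3`. Since `cos(πs/2)` and its second derivative
vanish at `s = 3`, Leibniz's rule leaves `ζ''(-2) = 2 G'(3) · π/2 = π G'(3)`, and `G'(3)` is
expanded using `Γ(3) = 2` and `Γ'(3) = 3 - 2γ`. -/

noncomputable def zetaReflectionFactor (s : ℂ) : ℂ :=
  2 * (2 * (π : ℂ)) ^ (-s) * Gamma s * riemannZeta s

lemma riemannZeta_one_sub_eq_zetaReflectionFactor_mul_cos {s : ℂ} (hs : ∀ n : ℕ, s ≠ -n)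
    (hs' : s ≠ 1) : riemannZeta (1 - s) = zetaReflectionFactor s * cos (π / 2 * s) := by
  rw [riemannZeta_one_sub hs hs', zetaReflectionFactor, mul_div_right_comm]
  ring

lemma ne_neg_natCast_of_re_pos {s : ℂ} (hs : 0 < s.re) (n : ℕ) : s ≠ -n := by
  rintro rfl
  simp only [neg_re, natCast_re] at hs
  linarith [n.cast_nonneg (α := ℝ)]

lemma ne_one_of_one_lt_re {s : ℂ} (hs : 1 < s.re) : s ≠ 1 := by
  rintro rfl
  simp at hs

lemma hasDerivAt_two_mul_two_pi_cpow_neg (s : ℂ) :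
    HasDerivAt (fun s : ℂ ↦ 2 * (2 * (π : ℂ)) ^ (-s))
      (-(2 * (2 * (π : ℂ)) ^ (-s) * log (2 * π))) s := by
  have h2pi : (2 * π : ℂ) ≠ 0 := by simp [Real.pi_ne_zero]
  exact (((hasDerivAt_neg' s).const_cpow (Or.inl h2pi)).const_mul 2).congr_deriv (by ring)

lemma differentiableAt_zetaReflectionFactor {s : ℂ} (hs : ∀ n : ℕ, s ≠ -n) (hs' : s ≠ 1) :
    DifferentiableAt ℂ zetaReflectionFactor s :=
  ((hasDerivAt_two_mul_two_pi_cpow_neg s).differentiableAt.mul (differentiableAt_Gamma s hs)).mul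
    (differentiableAt_riemannZeta hs')

lemma analyticAt_zetaReflectionFactor {s : ℂ} (hs : 1 < s.re) :
    AnalyticAt ℂ zetaReflectionFactor s :=
  DifferentiableOn.analyticAt
    (fun _ hz ↦ (differentiableAt_zetaReflectionFactor (ne_neg_natCast_of_re_pos
      (zero_lt_one.trans hz)) (ne_one_of_one_lt_re hz)).differentiableWithinAt)
    ((isOpen_lt continuous_const continuous_re).mem_nhds hs)

lemma hasDerivAt_Gamma_three : HasDerivAt Gamma (3 - 2 * Real.eulerMascheroniConstant) 3 := by
  convert hasDerivAt_Gamma_nat 2 using 1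
  · norm_num [harmonic, Finset.sum_range_succ]
    ring
  · norm_num

lemma Gamma_three : Gamma 3 = 2 := by
  norm_num [Gamma_ofNat_eq_factorial 2]

lemma hasDerivAt_zetaReflectionFactor_three :
    HasDerivAt zetaReflectionFactor
      ((deriv riemannZeta 3 + (3 / 2 - Real.eulerMascheroniConstant - Real.log (2 * π))
        * riemannZeta 3) / (2 * π ^ 3)) 3 := by
  have hζ := (differentiableAt_riemannZeta (by norm_num : (3 : ℂ) ≠ 1)).hasDerivAt
  refine (((hasDerivAt_two_mul_two_pi_cpow_neg 3).fun_mul hasDerivAt_Gamma_three).fun_mul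
    hζ).congr_deriv ?_
  have hpi : (π : ℂ) ≠ 0 := by simp [Real.pi_ne_zero]
  rw [Gamma_three, cpow_neg, show (3 : ℂ) = (3 : ℕ) by norm_num, cpow_natCast,
    ← ofReal_ofNat, ← ofReal_mul, ← ofReal_log (by positivity)]
  push_cast
  field_simp
  ring

lemma cos_three_pi_div_two : cos (π / 2 * 3) = 0 := by
  rw [show (π / 2 * 3 : ℂ) = π / 2 + π by ring, cos_add_pi, cos_pi_div_two, neg_zero]

lemma sin_three_pi_div_two : sin (π / 2 * 3) = -1 := by
  rw [show (π / 2 * 3 : ℂ) = π / 2 + π by ring, sin_add_pi, sin_pi_div_two]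

lemma iteratedDeriv_two_riemannZeta_neg_two :
    iteratedDeriv 2 riemannZeta (-2) = π * deriv zetaReflectionFactor 3 := by
  have h3 : (1 : ℝ) < (3 : ℂ).re := by norm_num
  have hreflect :
      iteratedDeriv 2 riemannZeta (-2) = iteratedDeriv 2 (fun s ↦ riemannZeta (1 - s)) 3 := by
    rw [iteratedDeriv_comp_const_sub]
    norm_num
  have hfun : (fun s ↦ riemannZeta (1 - s)) =ᶠ[𝓝 3]
      zetaReflectionFactor * fun s ↦ cos (π / 2 * s) := by
    filter_upwards [(isOpen_lt continuous_const continuous_re).mem_nhds h3] with s hs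
    exact riemannZeta_one_sub_eq_zetaReflectionFactor_mul_cos
      (ne_neg_natCast_of_re_pos (zero_lt_one.trans hs)) (ne_one_of_one_lt_re hs)
  have hcos : ContDiff ℂ 2 fun s : ℂ ↦ cos (π / 2 * s) := by fun_prop
  rw [hreflect, hfun.iteratedDeriv_eq,
    iteratedDeriv_mul (analyticAt_zetaReflectionFactor h3).contDiffAt hcos.contDiffAt]
  simp only [Finset.sum_range_succ, iteratedDeriv_comp_const_mul contDiff_cos]
  simp [cos_three_pi_div_two, sin_three_pi_div_two]
  ring

/-- `ζ′(3) = 2π²·ζ″(−2) + (ln(2π) − 3/2 + γ)·ζ(3)`, where `ζ′` and `ζ″`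
are the first and second derivatives of the Riemann zeta function and `γ` is the
Euler–Mascheroni constant. -/
theorem deriv_zeta_three :
    deriv riemannZeta 3 =
      2 * (Real.pi : ℂ) ^ 2 * iteratedDeriv 2 riemannZeta (-2) +
        ((Real.log (2 * Real.pi) : ℂ) - 3 / 2 + (Real.eulerMascheroniConstant : ℂ)) *
          riemannZeta 3 := by
  have hpi : (π : ℂ) ≠ 0 := by simp [Real.pi_ne_zero]
  rw [iteratedDeriv_two_riemannZeta_neg_two, hasDerivAt_zetaReflectionFactor_three.deriv]
  field_simp
  ring
end
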